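/- Let S = ⟨a_1,…,a_n⟩ ⊆ ℤ^m ⊕ T be a reduced monoid, let {g_1,…,g_s} be a binomial generating set of the lattice ideal I_{S̃} of S̃ = ⟨(a_1,1),…,(a_n,1)⟩, and set B = {b_1,…,b_s} with b_i = deg_S(g_i). Then S ∖ L_S = Ap_S(B). -/

import Mathlib

/-!
Two factorizations `λ ≠ ν` of `x` of the same length are exactly a nonzero binomial
`x^λ - x^ν` of `I_{S̃}`. If `x - b_i ∈ S`, adding the two exponents of `g_i` to a factorization
of `x - b_i` gives two such factorizations of `x`. Conversely, `x^λ - x^ν` lies in the ideal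
generated by the `g_i`, hence in the monomial ideal generated by their terms, so some term of
some `g_i` divides `x^λ`; since both terms of `g_i` have degree `b_i`, this gives `x - b_i ∈ S`.
-/

open MvPolynomial

/-- The `S`-degree of an exponent vector. -/
def degS {n : ℕ} {G : Type*} [AddCommMonoid G] (a : Fin n → G) (lam : Fin n → ℕ) : G :=
  ∑ i, lam i • a i

/-- The lattice ideal of the monoid generated by `a`. -/
noncomputable def latticeIdeal (K : Type) [Field K] {n : ℕ} {G : Type*} [AddCommMonoid G]
    (a : Fin n → G) : Ideal (MvPolynomial (Fin n) K) :=
  Ideal.span {f | ∃ α β : Fin n →₀ ℕ, degS a ⇑α = degS a ⇑β ∧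
    f = monomial α (1 : K) - monomial β 1}

/-- The set of elements of `S = ⟨a_1,…,a_n⟩` having at least two different factorizations
of the same length. -/
def LSet {n : ℕ} {G : Type*} [AddCommMonoid G] (a : Fin n → G) : Set G :=
  {x | ∃ lam nu : Fin n → ℕ, lam ≠ nu ∧ degS a lam = x ∧ degS a nu = x ∧
    ∑ i, lam i = ∑ i, nu i}

/-- The Apéry set of the monoid generated by `a` with respect to the family `b`. -/
def apery {n s : ℕ} {G : Type*} [AddCommGroup G] (a : Fin n → G) (b : Fin s → G) : Set G :=
  {x | x ∈ AddSubmonoid.closure (Set.range a) ∧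
    ∀ i, x - b i ∉ AddSubmonoid.closure (Set.range a)}

theorem MvPolynomial.span_binomials_le_span_monomials {σ R ι : Type*} [CommRing R]
    (α β : ι → σ →₀ ℕ) :
    Ideal.span (Set.range fun i => monomial (α i) (1 : R) - monomial (β i) 1) ≤
      Ideal.span ((fun c => monomial c (1 : R)) '' (Set.range α ∪ Set.range β)) := by
  rw [Ideal.span_le]
  rintro _ ⟨i, rfl⟩
  exact Ideal.sub_mem _ (Ideal.subset_span ⟨α i, Or.inl ⟨i, rfl⟩, rfl⟩)
    (Ideal.subset_span ⟨β i, Or.inr ⟨i, rfl⟩, rfl⟩)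

theorem MvPolynomial.exists_le_of_mem_span_binomials {σ R ι : Type*} [CommRing R]
    {α β : ι → σ →₀ ℕ} {p : MvPolynomial σ R}
    (hp : p ∈ Ideal.span (Set.range fun i => monomial (α i) (1 : R) - monomial (β i) 1))
    {c : σ →₀ ℕ} (hc : c ∈ p.support) :
    ∃ i, α i ≤ c ∨ β i ≤ c := by
  obtain ⟨_, ⟨i, rfl⟩ | ⟨i, rfl⟩, hle⟩ :=
    mem_ideal_span_monomial_image.mp (span_binomials_le_span_monomials α β hp) c hc
  exacts [⟨i, Or.inl hle⟩, ⟨i, Or.inr hle⟩]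

section degS

variable {n : ℕ} {G : Type*}

theorem degS_add [AddCommMonoid G] (a : Fin n → G) (lam nu : Fin n → ℕ) :
    degS a (lam + nu) = degS a lam + degS a nu := by
  simp [degS, add_smul, Finset.sum_add_distrib]

theorem degS_tsub [AddCommGroup G] (a : Fin n → G) {lam nu : Fin n → ℕ} (h : nu ≤ lam) :
    degS a (lam - nu) = degS a lam - degS a nu :=
  eq_sub_of_add_eq (by rw [← degS_add, tsub_add_cancel_of_le h])

theorem mem_closure_range_iff_exists_degS [AddCommMonoid G] (a : Fin n → G) {x : G} :
    x ∈ AddSubmonoid.closure (Set.range a) ↔ ∃ lam, degS a lam = x := by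
  simp only [AddSubmonoid.mem_closure_range_iff_of_fintype, degS, eq_comm]

theorem degS_prod_one [AddCommMonoid G] {R : Type*} [AddCommMonoidWithOne R] (a : Fin n → G)
    (lam : Fin n → ℕ) :
    degS (fun j => (a j, (1 : R))) lam = (degS a lam, ((∑ i, lam i : ℕ) : R)) := by
  ext <;> simp [degS, Prod.fst_sum, Prod.snd_sum]

theorem degS_prod_one_eq_iff [AddCommMonoid G] {R : Type*} [AddCommMonoidWithOne R] [CharZero R]
    (a : Fin n → G) (lam nu : Fin n → ℕ) :
    degS (fun j => (a j, (1 : R))) lam = degS (fun j => (a j, (1 : R))) nu ↔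
      degS a lam = degS a nu ∧ ∑ i, lam i = ∑ i, nu i := by
  simp only [degS_prod_one, Prod.mk.injEq, Nat.cast_inj]

end degS

section LSet

variable {n s : ℕ} {G : Type*} [AddCommGroup G] (a : Fin n → G)

theorem degS_add_mem_LSet {α β : Fin n → ℕ} (hne : α ≠ β) (hdeg : degS a α = degS a β)
    (hlen : ∑ i, α i = ∑ i, β i) (mu : Fin n → ℕ) : degS a (mu + α) ∈ LSet a := by
  refine ⟨mu + α, mu + β, fun h => hne (add_left_cancel h), rfl, ?_, ?_⟩
  · rw [degS_add, degS_add, hdeg]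
  · simp only [Pi.add_apply, Finset.sum_add_distrib, hlen]

theorem exists_sub_mem_closure_of_mem_LSet (K : Type) [Field K] {R : Type*}
    [AddCommMonoidWithOne R] [CharZero R] (gα gβ : Fin s → Fin n →₀ ℕ)
    (hdeg : ∀ i, degS a (gα i) = degS a (gβ i))
    (hgen : latticeIdeal K (fun j => (a j, (1 : R))) ≤
      Ideal.span (Set.range fun i => monomial (gα i) (1 : K) - monomial (gβ i) 1))
    {x : G} (hx : x ∈ LSet a) :
    ∃ i, x - degS a (gα i) ∈ AddSubmonoid.closure (Set.range a) := by
  obtain ⟨lam, nu, hne, rfl, hnu, hlen⟩ := hx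
  set lam' := Finsupp.equivFunOnFinite.symm lam
  set nu' := Finsupp.equivFunOnFinite.symm nu
  have hbinom : monomial lam' (1 : K) - monomial nu' 1 ∈ latticeIdeal K fun j => (a j, (1 : R)) :=
    Ideal.subset_span ⟨lam', nu', (degS_prod_one_eq_iff a lam nu).mpr ⟨hnu.symm, hlen⟩, rfl⟩
  have hsupp : lam' ∈ (monomial lam' (1 : K) - monomial nu' 1).support := by
    have hne' : nu' ≠ lam' := fun h => hne (congrArg DFunLike.coe h).symm
    simp [coeff_sub, coeff_monomial, hne']
  obtain ⟨i, hle | hle⟩ := exists_le_of_mem_span_binomials (hgen hbinom) hsupp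
  · exact ⟨i, (mem_closure_range_iff_exists_degS a).mpr ⟨_, degS_tsub a hle⟩⟩
  · exact ⟨i, (mem_closure_range_iff_exists_degS a).mpr ⟨_, hdeg i ▸ degS_tsub a hle⟩⟩

theorem mem_LSet_iff_exists_sub_mem_closure (K : Type) [Field K] {R : Type*}
    [AddCommMonoidWithOne R] [CharZero R] (gα gβ : Fin s → Fin n →₀ ℕ) (hne : ∀ i, gα i ≠ gβ i)
    (hhom : ∀ i, degS (fun j => (a j, (1 : R))) (gα i) = degS (fun j => (a j, (1 : R))) (gβ i))
    (hgen : latticeIdeal K (fun j => (a j, (1 : R))) ≤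
      Ideal.span (Set.range fun i => monomial (gα i) (1 : K) - monomial (gβ i) 1))
    (x : G) :
    x ∈ LSet a ↔ ∃ i, x - degS a (gα i) ∈ AddSubmonoid.closure (Set.range a) := by
  have hdeg i := ((degS_prod_one_eq_iff a _ _).mp (hhom i)).1
  refine ⟨exists_sub_mem_closure_of_mem_LSet a K gα gβ hdeg hgen, ?_⟩
  rintro ⟨i, hi⟩
  obtain ⟨mu, hmu⟩ := (mem_closure_range_iff_exists_degS a).mp hi
  have hlen := ((degS_prod_one_eq_iff a _ _).mp (hhom i)).2
  simpa [degS_add, hmu] using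
    degS_add_mem_LSet a (fun h => hne i (DFunLike.coe_injective h)) (hdeg i) hlen mu

end LSet

theorem compl_LSet_eq_apery_general
    {m n s : ℕ} {T : Type} [AddCommGroup T]
    (K : Type) [Field K]
    (a : Fin n → (Fin m → ℤ) × T)
    (gα gβ : Fin s → (Fin n →₀ ℕ))
    -- `g_i = x^{gα i} - x^{gβ i}` is a (nonzero) binomial of `I_{S̃}`:
    (hne : ∀ i, gα i ≠ gβ i)
    (hhom : ∀ i, degS (fun j => ((a j, (1 : ℤ)) : ((Fin m → ℤ) × T) × ℤ)) ⇑(gα i) =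
                 degS (fun j => ((a j, (1 : ℤ)) : ((Fin m → ℤ) × T) × ℤ)) ⇑(gβ i))
    -- `{g_1,…,g_s}` generates `I_{S̃}`:
    (hgen : Ideal.span (Set.range fun i => monomial (gα i) (1 : K) - monomial (gβ i) 1) =
      latticeIdeal K (fun j => ((a j, (1 : ℤ)) : ((Fin m → ℤ) × T) × ℤ))) :
    (AddSubmonoid.closure (Set.range a) : Set ((Fin m → ℤ) × T)) \ LSet a =
      apery a (fun i => degS a ⇑(gα i)) := by
  ext x
  simp only [Set.mem_sdiff, SetLike.mem_coe, apery, Set.mem_ofPred_eq,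
    mem_LSet_iff_exists_sub_mem_closure a K gα gβ hne hhom hgen.ge x, not_exists]

/-- **Theorem.** Let `S = ⟨a_1,…,a_n⟩ ⊆ ℤ^m ⊕ T` be a reduced monoid,
`{g_1,…,g_s}` a binomial generating set of `I_{S̃}` and `b_i = deg_S(g_i)`.
Then `S \ L_S = Ap_S(B)`. -/
theorem compl_LSet_eq_apery
    {m n s : ℕ} {T : Type} [AddCommGroup T] [Fintype T]
    (K : Type) [Field K]
    (a : Fin n → (Fin m → ℤ) × T)
    -- `S` is reduced:
    (hred : ∀ x, x ∈ AddSubmonoid.closure (Set.range a) →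
      -x ∈ AddSubmonoid.closure (Set.range a) → x = 0)
    -- `a` is the minimal set of generators:
    (hmin : ∀ i, a i ∉ AddSubmonoid.closure (Set.range a \ {a i}))
    (gα gβ : Fin s → (Fin n →₀ ℕ))
    -- `g_i = x^{gα i} - x^{gβ i}` is a (nonzero) binomial of `I_{S̃}`:
    (hne : ∀ i, gα i ≠ gβ i)
    (hhom : ∀ i, degS (fun j => ((a j, (1 : ℤ)) : ((Fin m → ℤ) × T) × ℤ)) ⇑(gα i) =
                 degS (fun j => ((a j, (1 : ℤ)) : ((Fin m → ℤ) × T) × ℤ)) ⇑(gβ i))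
    -- `{g_1,…,g_s}` generates `I_{S̃}`:
    (hgen : Ideal.span (Set.range fun i => monomial (gα i) (1 : K) - monomial (gβ i) 1) =
      latticeIdeal K (fun j => ((a j, (1 : ℤ)) : ((Fin m → ℤ) × T) × ℤ))) :
    (AddSubmonoid.closure (Set.range a) : Set ((Fin m → ℤ) × T)) \ LSet a =
      apery a (fun i => degS a ⇑(gα i)) :=
  compl_LSet_eq_apery_general K a gα gβ hne hhom hgen
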